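/- If a forest T has maximum degree at most 3 and some connected component of T contains two distinct vertices of degree 3, then T contains H_ℓ as an induced subgraph for some ℓ ≥ 1, namely for ℓ equal to the minimum distance between two degree-3 vertices of T. -/

import Mathlib

/-! Let `u`, `v` be degree-3 vertices of the forest at minimal distance `ℓ`, joined by the
path `p`. Sending the spine of `H_ℓ` along `p` and its four leaves to the two neighbours of `u`
and of `v` off `p` is an injective homomorphism: the four leaves avoid `p` and each other because
paths in a forest are unique. An injective homomorphism from a connected graph into a forest is
automatically induced, since the image of a path joining two vertices whose images are adjacent
must be that single edge. -/

open scoped Classical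

/-- The graph `H_ℓ`: a central path `0, 1, ..., ℓ` of length `ℓ`, with two pendant
leaves `ℓ+1, ℓ+2` attached to `0` and two pendant leaves `ℓ+3, ℓ+4` attached to `ℓ`. -/
def Hgraph (l : ℕ) : SimpleGraph (Fin (l + 5)) :=
  SimpleGraph.fromRel (fun a b =>
    (a.val + 1 = b.val ∧ b.val ≤ l) ∨
    (a.val = 0 ∧ (b.val = l + 1 ∨ b.val = l + 2)) ∨
    (a.val = l ∧ (b.val = l + 3 ∨ b.val = l + 4)))

open SimpleGraph

lemma Hgraph_adj_iff (l : ℕ) (i j : Fin (l + 5)) :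
    (Hgraph l).Adj i j ↔ i.val ≠ j.val ∧
      ((i.val + 1 = j.val ∧ j.val ≤ l) ∨ (j.val + 1 = i.val ∧ i.val ≤ l) ∨
       (i.val = 0 ∧ (j.val = l + 1 ∨ j.val = l + 2)) ∨
       (j.val = 0 ∧ (i.val = l + 1 ∨ i.val = l + 2)) ∨
       (i.val = l ∧ (j.val = l + 3 ∨ j.val = l + 4)) ∨
       (j.val = l ∧ (i.val = l + 3 ∨ i.val = l + 4))) := by
  simp only [Hgraph, fromRel_adj, ne_eq, Fin.ext_iff]
  omega

lemma Hgraph_connected (l : ℕ) : (Hgraph l).Connected := by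
  have hspine : ∀ k (hk : k ≤ l), (Hgraph l).Reachable 0 ⟨k, by omega⟩ := by
    intro k hk
    induction k with
    | zero => rfl
    | succ k ih =>
      exact (ih (by omega)).trans <| Adj.reachable <| (Hgraph_adj_iff l _ _).2 (by simp; omega)
  refine (connected_iff_exists_forall_reachable _).2 ⟨0, fun ⟨k, hk⟩ => ?_⟩
  rcases le_or_gt k l with hkl | hlk
  · exact hspine k hkl
  · rcases (by omega : k = l + 1 ∨ k = l + 2 ∨ k = l + 3 ∨ k = l + 4) with rfl | rfl | rfl | rfl
    · exact ((Hgraph_adj_iff l _ _).2 (by simp)).reachable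
    · exact ((Hgraph_adj_iff l _ _).2 (by simp)).reachable
    · exact (hspine l le_rfl).trans ((Hgraph_adj_iff l _ _).2 (by simp)).reachable
    · exact (hspine l le_rfl).trans ((Hgraph_adj_iff l _ _).2 (by simp)).reachable

namespace SimpleGraph

variable {V W : Type*} {G : SimpleGraph V} {H : SimpleGraph W}

theorem IsAcyclic.adj_of_injective_hom (hG : G.IsAcyclic) (hH : H.Connected) (f : H →g G)
    (hf : Function.Injective f) {x y : W} (h : G.Adj (f x) (f y)) : H.Adj x y := by
  obtain ⟨p, hp⟩ := hH.exists_isPath x y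
  have hmap : p.map f = h.toWalk :=
    congrArg Subtype.val <| (hG.subsingleton_path _ _).elim ⟨_, hp.map hf⟩ (.singleton h)
  exact Walk.adj_of_length_eq_one (by simpa using congrArg Walk.length hmap)

def IsAcyclic.embeddingOfInjectiveHom (hG : G.IsAcyclic) (hH : H.Connected) (f : H →g G)
    (hf : Function.Injective f) : H ↪g G :=
  ⟨⟨f, hf⟩, ⟨hG.adj_of_injective_hom hH f hf, f.map_adj⟩⟩

theorem exists_adj_adj_ne_of_three_le_degree {u : V} [Fintype (G.neighborSet u)]
    (h : 3 ≤ G.degree u) (x : V) :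
    ∃ a b, a ≠ b ∧ G.Adj u a ∧ G.Adj u b ∧ a ≠ x ∧ b ≠ x := by
  have : 1 < ((G.neighborFinset u).erase x).card := by
    have := Finset.pred_card_le_card_erase (s := G.neighborFinset u) (a := x)
    rw [card_neighborFinset_eq_degree] at this
    omega
  obtain ⟨a, ha, b, hb, hab⟩ := Finset.one_lt_card.1 this
  simp only [Finset.mem_erase, mem_neighborFinset] at ha hb
  exact ⟨a, b, hab, ha.2, hb.2, ha.1, hb.1⟩

theorem IsAcyclic.ne_of_adj_start_of_adj_end (hG : G.IsAcyclic) {u v a b : V} {p : G.Walk u v}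
    (hp : p.IsPath) (huv : u ≠ v) (hua : G.Adj u a) (ha : a ≠ p.snd) (hvb : G.Adj v b)
    (hb : b ≠ p.penultimate) : a ≠ b := by
  rintro rfl
  have hq : (Walk.cons hua.symm p).IsPath :=
    hp.cons fun hmem => ha (hG.eq_snd_of_adj_start hp hua hmem)
  apply hb
  rw [hG.eq_penultimate_of_adj_end hq hvb (Walk.start_mem_support _),
    Walk.penultimate_cons_of_not_nil _ _ (Walk.not_nil_of_ne huv)]

theorem IsAcyclic.nodup_support_append (hG : G.IsAcyclic) {u v : V} {p : G.Walk u v}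
    (hp : p.IsPath) (huv : u ≠ v) {a₁ a₂ b₁ b₂ : V} (ha : a₁ ≠ a₂) (hb : b₁ ≠ b₂)
    (hua₁ : G.Adj u a₁) (hua₂ : G.Adj u a₂) (hvb₁ : G.Adj v b₁) (hvb₂ : G.Adj v b₂)
    (ha₁ : a₁ ≠ p.snd) (ha₂ : a₂ ≠ p.snd) (hb₁ : b₁ ≠ p.penultimate)
    (hb₂ : b₂ ≠ p.penultimate) :
    (p.support ++ [a₁, a₂, b₁, b₂]).Nodup := by
  have hout₁ : a₁ ∉ p.support := fun h => ha₁ (hG.eq_snd_of_adj_start hp hua₁ h)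
  have hout₂ : a₂ ∉ p.support := fun h => ha₂ (hG.eq_snd_of_adj_start hp hua₂ h)
  have hout₃ : b₁ ∉ p.support := fun h => hb₁ (hG.eq_penultimate_of_adj_end hp hvb₁ h)
  have hout₄ : b₂ ∉ p.support := fun h => hb₂ (hG.eq_penultimate_of_adj_end hp hvb₂ h)
  have hab := fun {a b} => hG.ne_of_adj_start_of_adj_end (a := a) (b := b) hp huv
  simp only [List.nodup_append, hp.support_nodup, List.nodup_cons, List.mem_cons,
    List.not_mem_nil, List.nodup_nil]
  refine ⟨trivial, ?_, fun x hx y hy => ?_⟩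
  · simp [ha, hb, hab hua₁ ha₁ hvb₁ hb₁, hab hua₁ ha₁ hvb₂ hb₂, hab hua₂ ha₂ hvb₁ hb₁,
      hab hua₂ ha₂ hvb₂ hb₂]
  · rintro rfl
    rcases hy with rfl | rfl | rfl | rfl | hy <;> contradiction

theorem IsAcyclic.nonempty_Hgraph_embedding (hG : G.IsAcyclic) {u v : V} {p : G.Walk u v}
    {a₁ a₂ b₁ b₂ : V} (hnodup : (p.support ++ [a₁, a₂, b₁, b₂]).Nodup)
    (hua₁ : G.Adj u a₁) (hua₂ : G.Adj u a₂) (hvb₁ : G.Adj v b₁) (hvb₂ : G.Adj v b₂) :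
    Nonempty (Hgraph p.length ↪g G) := by
  set l := p.length
  set L := p.support ++ [a₁, a₂, b₁, b₂]
  have hlen : L.length = l + 5 := by simp [L, l]
  have hspine : ∀ k (hk : k ≤ l), L[k]'(by omega) = p.getVert k := by
    intro k hk
    simp [L, List.getElem_append_left (by simp; omega : k < p.support.length),
      p.getVert_eq_support_getElem hk]
  have hleaf : L[l + 1]'(by omega) = a₁ ∧ L[l + 2]'(by omega) = a₂ ∧
      L[l + 3]'(by omega) = b₁ ∧ L[l + 4]'(by omega) = b₂ := by
    simp [L, l]
  have hrel : ∀ i j (hi : i < l + 5) (hj : j < l + 5), (i + 1 = j ∧ j ≤ l) ∨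
      (i = 0 ∧ (j = l + 1 ∨ j = l + 2)) ∨ (i = l ∧ (j = l + 3 ∨ j = l + 4)) →
      G.Adj (L[i]'(by omega)) (L[j]'(by omega)) := by
    rintro i j hi hj (⟨rfl, hjl⟩ | ⟨rfl, rfl | rfl⟩ | ⟨rfl, rfl | rfl⟩)
    · rw [hspine i (by omega), hspine (i + 1) hjl]
      exact p.adj_getVert_succ (by omega)
    · rw [hspine 0 (by omega), hleaf.1]
      simpa using hua₁
    · rw [hspine 0 (by omega), hleaf.2.1]
      simpa using hua₂
    · rw [hspine l le_rfl, hleaf.2.2.1]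
      simpa [l] using hvb₁
    · rw [hspine l le_rfl, hleaf.2.2.2]
      simpa [l] using hvb₂
  let f : Hgraph l →g G :=
    { toFun := fun k => L[k.val]'(by omega)
      map_rel' := fun {i j} h => by
        rw [Hgraph, fromRel_adj] at h
        exact h.2.elim (hrel i j i.2 j.2) fun h' => (hrel j i j.2 i.2 h').symm }
  exact ⟨hG.embeddingOfInjectiveHom (Hgraph_connected l) f
    fun i j h => Fin.ext (hnodup.getElem_inj_iff.1 h)⟩

end SimpleGraph

theorem forest_two_deg3_contains_Hgraph_general {V : Type*} [Fintype V] (T : SimpleGraph V)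
    (hforest : T.IsAcyclic)
    (h : ∃ u v : V, u ≠ v ∧ T.degree u = 3 ∧ T.degree v = 3 ∧ T.Reachable u v) :
    ∃ l : ℕ, 1 ≤ l ∧
      IsLeast {d : ℕ | ∃ u v : V, u ≠ v ∧ T.degree u = 3 ∧ T.degree v = 3 ∧
        T.Reachable u v ∧ T.dist u v = d} l ∧
      Nonempty (Hgraph l ↪g T) := by
  set S := {d : ℕ | ∃ u v : V, u ≠ v ∧ T.degree u = 3 ∧ T.degree v = 3 ∧
    T.Reachable u v ∧ T.dist u v = d}
  have hS : S.Nonempty := by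
    obtain ⟨u, v, huv, hu, hv, hreach⟩ := h
    exact ⟨_, u, v, huv, hu, hv, hreach, rfl⟩
  have hleast := isLeast_csInf hS
  obtain ⟨u, v, huv, hu, hv, hreach, hdist⟩ := hleast.1
  obtain ⟨p, hp, hlen⟩ := hreach.exists_path_of_dist
  obtain ⟨a₁, a₂, ha, hua₁, hua₂, ha₁, ha₂⟩ := exists_adj_adj_ne_of_three_le_degree hu.ge p.snd
  obtain ⟨b₁, b₂, hb, hvb₁, hvb₂, hb₁, hb₂⟩ :=
    exists_adj_adj_ne_of_three_le_degree hv.ge p.penultimate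
  refine ⟨sInf S, hdist ▸ hreach.pos_dist_of_ne huv, hleast, ?_⟩
  rw [← hdist, ← hlen]
  exact hforest.nonempty_Hgraph_embedding
    (hforest.nodup_support_append hp huv ha hb hua₁ hua₂ hvb₁ hvb₂ ha₁ ha₂ hb₁ hb₂)
    hua₁ hua₂ hvb₁ hvb₂

/-- If a forest `T` has maximum degree at most `3` and some connected component of `T`
contains two distinct vertices of degree `3`, then `T` contains `H_ℓ` as an induced
subgraph, where `ℓ ≥ 1` is the minimum distance between two distinct degree-3 vertices
of `T` lying in a common component. -/
theorem forest_two_deg3_contains_Hgraph {V : Type*} [Fintype V] (T : SimpleGraph V)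
    (hforest : T.IsAcyclic) (hdeg : ∀ v : V, T.degree v ≤ 3)
    (h : ∃ u v : V, u ≠ v ∧ T.degree u = 3 ∧ T.degree v = 3 ∧ T.Reachable u v) :
    ∃ l : ℕ, 1 ≤ l ∧
      IsLeast {d : ℕ | ∃ u v : V, u ≠ v ∧ T.degree u = 3 ∧ T.degree v = 3 ∧
        T.Reachable u v ∧ T.dist u v = d} l ∧
      Nonempty (Hgraph l ↪g T) :=
  forest_two_deg3_contains_Hgraph_general T hforest h
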